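/- Let V be a quadratic or bilinear R-module with unique base and isotypical components V_λ (λ ∈ Λ). Then V = ⊥_{λ ∈ Λ'} V_λ where Λ' = {λ : V_λ ≠ 0}, and every isometry σ: V → V' onto another such module maps each indecomposable component of V onto an indecomposable component of V' of the same type, so σ(V_λ) = V'_λ for every λ. -/

import Mathlib

universe u

/-- `B` is a base of the `R`-module `V`. -/
def IsBaseSet (R : Type*) [CommSemiring R] {V : Type*} [AddCommMonoid V] [Module R V]
    (B : Set V) : Prop :=
  ∀ x : V, ∃! c : B →₀ R, x = c.sum fun b r => r • (b : V)

/-- `V` is the internal direct sum of the family of submodules `W i`. -/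
def IsInternalSum {R : Type*} [CommSemiring R] {V : Type*} [AddCommMonoid V] [Module R V]
    {ι : Type*} (W : ι → Submodule R V) : Prop :=
  ∀ x : V, ∃! c : ι →₀ V, (∀ i, c i ∈ W i) ∧ x = c.sum fun _ v => v

/-- A quadratic `R`-module datum: a carrier with a quadratic form and a chosen base. -/
structure QMod (R : Type u) [CommSemiring R] where
  carrier : Type u
  [acm : AddCommMonoid carrier]
  [mod : Module R carrier]
  q : carrier → R
  base : Set carrier

attribute [instance] QMod.acm QMod.mod

namespace QMod
variable {R : Type u} [CommSemiring R]

/-- quasilinearity of the form of `M` on `S × T`. -/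
def Qlin (M : QMod R) (S T : Set M.carrier) : Prop :=
  ∀ x ∈ S, ∀ y ∈ T, M.q (x + y) = M.q x + M.q y

/-- `M` is a quadratic module (its form admits a symmetric bilinear companion) whose
chosen base is a base, and `M` has unique base. -/
def Good (M : QMod R) : Prop :=
  (∀ (a : R) (x : M.carrier), M.q (a • x) = a * a * M.q x) ∧
  (∃ b : M.carrier →ₗ[R] M.carrier →ₗ[R] R,
      (∀ x y, b x y = b y x) ∧ ∀ x y, M.q (x + y) = M.q x + M.q y + b x y) ∧
  IsBaseSet R M.base ∧
  (∀ B' : Set M.carrier, IsBaseSet R B' →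
    ∀ v ∈ B', ∃ u : Rˣ, ∃ w ∈ M.base, v = (u : R) • w)

/-- `W₁` is disjointly orthogonal to `W₂` in `M`. -/
def DisjOrth (M : QMod R) (W₁ W₂ : Submodule R M.carrier) : Prop :=
  W₁ ⊓ W₂ = ⊥ ∧ M.Qlin (W₁ : Set M.carrier) (W₂ : Set M.carrier)

/-- Two distinct base vectors are joined by an edge iff `q` is not quasilinear on the
pair of lines they span (equivalently, any quasiminimal companion is nonzero on them). -/
def edge (M : QMod R) (x y : M.carrier) : Prop :=
  x ∈ M.base ∧ y ∈ M.base ∧ x ≠ y ∧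
    ¬ M.Qlin (Submodule.span R {x} : Submodule R M.carrier)
        (Submodule.span R {y} : Submodule R M.carrier)

/-- The equivalence class of the base vector `x` under chains of edges. -/
def comp (M : QMod R) (x : M.carrier) : Set M.carrier :=
  {y ∈ M.base | x = y ∨ Relation.TransGen M.edge x y}

/-- The bases of the indecomposable components of `M`. -/
def comps (M : QMod R) : Set (Set M.carrier) := {C | ∃ x ∈ M.base, C = M.comp x}

/-- Isometry of quadratic modules. -/
def Isom (M N : QMod R) : Prop :=
  ∃ e : M.carrier ≃ₗ[R] N.carrier, ∀ x, N.q (e x) = M.q x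

/-- `M` is indecomposable: no nontrivial disjoint orthogonal decomposition into
basic submodules. -/
def Indecomp (M : QMod R) : Prop :=
  ¬ ∃ S₁ S₂ : Set M.carrier, S₁ ∪ S₂ = M.base ∧ Disjoint S₁ S₂ ∧ S₁.Nonempty ∧ S₂.Nonempty ∧
      M.DisjOrth (Submodule.span R S₁) (Submodule.span R S₂)

/-- The quadratic module carried by the basic submodule spanned by `C`. -/
def restrict (M : QMod R) (C : Set M.carrier) : QMod R where
  carrier := ↥(Submodule.span R C)
  q := fun x => M.q (x : M.carrier)
  base := {v : ↥(Submodule.span R C) | (v : M.carrier) ∈ C}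

/-- The number (a cardinal) of indecomposable components of `M` isometric to `N`. -/
noncomputable def mult (M N : QMod R) : Cardinal :=
  Cardinal.mk {C : Set M.carrier // C ∈ M.comps ∧ (M.restrict C).Isom N}

/-- External orthogonal sum `M ⊥ N` of two quadratic modules. -/
def orthSum (M N : QMod R) : QMod R where
  carrier := M.carrier × N.carrier
  q := fun p => M.q p.1 + N.q p.2
  base := (fun x => (x, (0 : N.carrier))) '' M.base ∪
    (fun y => ((0 : M.carrier), y)) '' N.base

/-- External orthogonal sum of `I`-many copies of `M`. -/
noncomputable def pow (M : QMod R) (I : Type u) : QMod R where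
  carrier := I →₀ M.carrier
  q := fun f => f.sum fun _ x => M.q x
  base := {f | ∃ i, ∃ v ∈ M.base, f = Finsupp.single i v}

end QMod

/-- A bilinear `R`-module datum: a carrier with a symmetric bilinear form and a base. -/
structure BMod (R : Type u) [CommSemiring R] where
  carrier : Type u
  [acm : AddCommMonoid carrier]
  [mod : Module R carrier]
  b : carrier → carrier → R
  base : Set carrier

attribute [instance] BMod.acm BMod.mod

namespace BMod
variable {R : Type u} [CommSemiring R]

/-- `M` is a bilinear module (`b` symmetric bilinear) whose chosen base is a base,
and `M` has unique base. -/
def Good (M : BMod R) : Prop :=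
  (∀ x y, M.b x y = M.b y x) ∧
  (∀ x y z, M.b (x + y) z = M.b x z + M.b y z) ∧
  (∀ (a : R) (x y : M.carrier), M.b (a • x) y = a * M.b x y) ∧
  IsBaseSet R M.base ∧
  (∀ B' : Set M.carrier, IsBaseSet R B' →
    ∀ v ∈ B', ∃ u : Rˣ, ∃ w ∈ M.base, v = (u : R) • w)

/-- `W₁` is disjointly orthogonal to `W₂` in `M`. -/
def DisjOrth (M : BMod R) (W₁ W₂ : Submodule R M.carrier) : Prop :=
  W₁ ⊓ W₂ = ⊥ ∧ ∀ x ∈ W₁, ∀ y ∈ W₂, M.b x y = 0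

/-- Edges between distinct base vectors: nonzero `b_alt`-value. -/
def edge (M : BMod R) (x y : M.carrier) : Prop :=
  x ∈ M.base ∧ y ∈ M.base ∧ x ≠ y ∧ M.b x y ≠ 0

/-- The equivalence class of the base vector `x` under chains of edges. -/
def comp (M : BMod R) (x : M.carrier) : Set M.carrier :=
  {y ∈ M.base | x = y ∨ Relation.TransGen M.edge x y}

/-- The bases of the indecomposable components of `M`. -/
def comps (M : BMod R) : Set (Set M.carrier) := {C | ∃ x ∈ M.base, C = M.comp x}

/-- Isometry of bilinear modules. -/
def Isom (M N : BMod R) : Prop :=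
  ∃ e : M.carrier ≃ₗ[R] N.carrier, ∀ x y, N.b (e x) (e y) = M.b x y

/-- `M` is indecomposable. -/
def Indecomp (M : BMod R) : Prop :=
  ¬ ∃ S₁ S₂ : Set M.carrier, S₁ ∪ S₂ = M.base ∧ Disjoint S₁ S₂ ∧ S₁.Nonempty ∧ S₂.Nonempty ∧
      M.DisjOrth (Submodule.span R S₁) (Submodule.span R S₂)

/-- The bilinear module carried by the basic submodule spanned by `C`. -/
def restrict (M : BMod R) (C : Set M.carrier) : BMod R where
  carrier := ↥(Submodule.span R C)
  b := fun x y => M.b (x : M.carrier) (y : M.carrier)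
  base := {v : ↥(Submodule.span R C) | (v : M.carrier) ∈ C}

/-- The number of indecomposable components of `M` isometric to `N`. -/
noncomputable def mult (M N : BMod R) : Cardinal :=
  Cardinal.mk {C : Set M.carrier // C ∈ M.comps ∧ (M.restrict C).Isom N}

/-- External orthogonal sum `M ⊥ N`. -/
def orthSum (M N : BMod R) : BMod R where
  carrier := M.carrier × N.carrier
  b := fun p p' => M.b p.1 p'.1 + N.b p.2 p'.2
  base := (fun x => (x, (0 : N.carrier))) '' M.base ∪
    (fun y => ((0 : M.carrier), y)) '' N.base

/-- External orthogonal sum of `I`-many copies of `M`. -/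
noncomputable def pow (M : BMod R) (I : Type u) : BMod R where
  carrier := I →₀ M.carrier
  b := fun f g => f.sum fun i x => M.b x (g i)
  base := {f | ∃ i, ∃ v ∈ M.base, f = Finsupp.single i v}

end BMod

/-!
The base `B` of `V` is partitioned according to the type of the component containing each base
vector, and `V_λ` is the span of the block of type `λ`. Coordinates in `B` are unique, so the
spans of the blocks of a partition of `B` form an internal direct sum; base vectors in different
blocks lie in different components, hence are not joined by an edge, and orthogonality of the
lines they span propagates to the spans of the blocks.

An isometry `σ : V → V'` carries `B` to the base `σ(B)` of `V'`, so, `V'` having unique base,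
each `σ(b)` is a unit multiple of some `b' ∈ B'`. Since `σ` preserves the forms, `b ↦ b'` maps
edges to edges; applying the same to `σ⁻¹` shows that it maps each component of `V` onto a
component of `V'`, and `σ` restricts to an isometry between them, which therefore have the same
type.
-/

open Submodule

section Base

variable {R : Type*} [CommSemiring R] {V V' : Type*} [AddCommMonoid V] [Module R V]
  [AddCommMonoid V'] [Module R V'] {B : Set V}

theorem isBaseSet_iff_bijective :
    IsBaseSet R B ↔ Function.Bijective (Finsupp.linearCombination R ((↑) : B → V)) := by
  rw [Function.bijective_iff_existsUnique]
  exact forall_congr' fun x => by simp only [Finsupp.linearCombination_apply, eq_comm]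

noncomputable def IsBaseSet.basis (hB : IsBaseSet R B) : Module.Basis B R V :=
  .ofRepr (LinearEquiv.ofBijective _ (isBaseSet_iff_bijective.1 hB)).symm

@[simp]
theorem IsBaseSet.basis_apply (hB : IsBaseSet R B) (i : B) : hB.basis i = i := by
  simp [IsBaseSet.basis]

theorem IsBaseSet.image (hB : IsBaseSet R B) (e : V ≃ₗ[R] V') : IsBaseSet R (e '' B) := by
  rw [isBaseSet_iff_bijective] at hB ⊢
  let κ : B ≃ e '' B := Equiv.Set.image e B e.injective
  let κ' := Finsupp.domLCongr (M := R) (R := R) κ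
  have hcomp : Finsupp.linearCombination R ((↑) : e '' B → V') ∘ κ' =
      e ∘ Finsupp.linearCombination R ((↑) : B → V) := by
    ext c
    simp [κ', Finsupp.domLCongr_apply, Finsupp.equivMapDomain_eq_mapDomain,
      Finsupp.linearCombination_mapDomain, κ, Function.comp_def]
    exact (Finsupp.apply_linearCombination R (e : V →ₗ[R] V') _ c).symm
  rw [← Function.Bijective.of_comp_iff _ κ'.bijective, hcomp]
  exact e.bijective.comp hB

theorem IsBaseSet.eq_of_smul_eq_smul (hB : IsBaseSet R B) {x y : V} (hx : x ∈ B) (hy : y ∈ B)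
    (u v : Rˣ) (h : (u : R) • x = (v : R) • y) : x = y := by
  have hrepr_mem : ∀ z (hz : z ∈ B), hB.basis.repr z = Finsupp.single ⟨z, hz⟩ 1 :=
    fun z hz => by simpa using hB.basis.repr_self ⟨z, hz⟩
  have hrepr := congrArg hB.basis.repr h
  rw [map_smul, map_smul, hrepr_mem x hx, hrepr_mem y hy, Finsupp.smul_single_one,
    Finsupp.smul_single_one, Finsupp.single_eq_single_iff] at hrepr
  rcases hrepr with ⟨hxy, -⟩ | ⟨hu, -⟩
  · exact congrArg Subtype.val hxy
  · have : Subsingleton R := subsingleton_of_zero_eq_one (by simpa [hu] using u.inv_mul)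
    have := Module.subsingleton R V
    exact Subsingleton.elim x y

end Base

section InternalSum

variable {R ι Λ V : Type*} [CommSemiring R] [AddCommMonoid V] [Module R V]
  {W : Λ → Submodule R V}

theorem IsInternalSum.inf_eq_bot (h : IsInternalSum W) {l m : Λ} (hlm : l ≠ m) :
    W l ⊓ W m = ⊥ := by
  classical
  refine eq_bot_iff.2 fun x hx => ?_
  have hsingle : ∀ n, x ∈ W n → (∀ k, Finsupp.single n x k ∈ W k) ∧
      x = (Finsupp.single n x).sum fun _ v => v := fun n hn =>
    ⟨fun k => by
      rw [Finsupp.single_apply]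
      split_ifs with hnk
      · exact hnk ▸ hn
      · exact zero_mem _,
     by rw [Finsupp.sum_single_index rfl]⟩
  have := (h x).unique (hsingle l hx.1) (hsingle m hx.2)
  simpa [Finsupp.single_eq_single_iff, hlm] using this

theorem IsInternalSum.subtype_ne_bot (h : IsInternalSum W) :
    IsInternalSum fun l : {l // W l ≠ ⊥} => W l := by
  classical
  intro x
  obtain ⟨c, ⟨hcW, hcx⟩, hc⟩ := h x
  have hsupp : ∀ l ∈ c.support, W l ≠ ⊥ := fun l hl hbot =>
    Finsupp.mem_support_iff.1 hl (by simpa [hbot] using hcW l)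
  refine ⟨c.subtypeDomain _, ⟨fun l => hcW l, ?_⟩, fun d ⟨hdW, hdx⟩ => ?_⟩
  · rwa [Finsupp.sum_subtypeDomain_index (h := fun _ v => v) hsupp]
  have hd : Finsupp.embDomain (.subtype _) d = c := by
    refine hc _ ⟨fun l => ?_, by rwa [Finsupp.sum_embDomain]⟩
    by_cases hl : W l = ⊥
    · rw [hl]
      exact Finsupp.embDomain_of_notMem_range _ _ _ (by simpa using hl)
    · exact (Finsupp.embDomain_apply_self _ d ⟨l, hl⟩).symm ▸ hdW ⟨l, hl⟩
  ext l
  rw [Finsupp.subtypeDomain_apply, ← hd]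
  exact (Finsupp.embDomain_apply_self _ _ _).symm

theorem Module.Basis.isInternalSum_span_fiber (b : Module.Basis ι R V) (τ : ι → Λ) :
    IsInternalSum fun l => span R (b '' (τ ⁻¹' {l})) := by
  classical
  have hrepr : ∀ c : Λ →₀ V, (∀ l, c l ∈ span R (b '' (τ ⁻¹' {l}))) → ∀ l,
      b.repr (c l) = (b.repr (c.sum fun _ v => v)).filter (τ · = l) := by
    intro c hc l
    have hsupp : ∀ k, ∀ i, b.repr (c k) i ≠ 0 → τ i = k := fun k i hi =>
      b.repr_support_subset_of_mem_span _ (hc k) (Finsupp.mem_support_iff.2 hi)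
    rw [map_finsuppSum, Finsupp.sum, Finsupp.filter_sum, Finset.sum_eq_single l]
    · exact ((Finsupp.filter_eq_self_iff _ _).2 (hsupp l)).symm
    · intro k _ hkl
      exact (Finsupp.filter_eq_zero_iff _ _).2 fun i hi =>
        by_contra fun h0 => hkl (hi ▸ hsupp k i h0).symm
    · intro hl
      simp [Finsupp.notMem_support_iff.1 hl, Finsupp.filter_zero]
  intro x
  set c : Λ →₀ V := (b.repr x).sum fun i a => Finsupp.single (τ i) (a • b i)
  have hcW : ∀ l, c l ∈ span R (b '' (τ ⁻¹' {l})) := fun l => by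
    rw [Finsupp.sum_apply]
    refine sum_mem fun i _ => ?_
    simp only [Finsupp.single_apply]
    split_ifs with hi
    · exact smul_mem _ _ (subset_span ⟨i, hi, rfl⟩)
    · exact zero_mem _
  have hcx : x = c.sum fun _ v => v := by
    rw [Finsupp.sum_sum_index (fun _ => rfl) (fun _ _ _ => rfl)]
    simp only [Finsupp.sum_single_index]
    exact (b.linearCombination_repr x).symm
  refine ⟨c, ⟨hcW, hcx⟩, fun d ⟨hdW, hdx⟩ => ?_⟩
  ext l
  apply b.repr.injective
  rw [hrepr d hdW, hrepr c hcW, ← hdx, ← hcx]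

theorem IsBaseSet.isInternalSum_span_of_partition {B : Set V} (hB : IsBaseSet R B)
    (P : Λ → V → Prop) (hP : ∀ x ∈ B, ∃! l, P l x) :
    IsInternalSum fun l => span R {x ∈ B | P l x} := by
  choose τ hτ using fun i : B => (hP i i.2).exists
  convert hB.basis.isInternalSum_span_fiber τ using 3 with l
  ext x
  simp only [Set.mem_sep_iff, Set.mem_image, Set.mem_preimage, Set.mem_singleton_iff,
    IsBaseSet.basis_apply, Subtype.exists, exists_and_right, exists_eq_right]
  constructor
  · rintro ⟨hx, hl⟩
    exact ⟨hx, (hP x hx).unique (hτ ⟨x, hx⟩) hl⟩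
  · rintro ⟨hx, rfl⟩
    exact ⟨hx, hτ _⟩

end InternalSum

section Components

variable {V V' Λ : Type*} (r : V → V → Prop) (B : Set V)

def baseComp (x : V) : Set V := {y ∈ B | x = y ∨ Relation.TransGen r x y}

def baseComps : Set (Set V) := {C | ∃ x ∈ B, C = baseComp r B x}

variable {r B} {r' : V' → V' → Prop} {B' : Set V'}

theorem mem_baseComp {x y : V} :
    y ∈ baseComp r B x ↔ y ∈ B ∧ Relation.ReflTransGen r x y := by
  rw [Relation.reflTransGen_iff_eq_or_transGen, @eq_comm _ y x]
  rfl

theorem baseComp_eq_of_mem [Std.Symm r] {x y : V} (h : y ∈ baseComp r B x) :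
    baseComp r B y = baseComp r B x := by
  rw [mem_baseComp] at h
  ext z
  simp only [mem_baseComp]
  exact and_congr_right fun _ => ⟨h.2.trans, (symm h.2).trans⟩

theorem sUnion_baseComps_filter [Std.Symm r] (P : Set V → Prop) :
    ⋃₀ {C | C ∈ baseComps r B ∧ P C} = {x ∈ B | P (baseComp r B x)} := by
  ext y
  constructor
  · rintro ⟨_, ⟨⟨x, -, rfl⟩, hP⟩, hy⟩
    exact ⟨(mem_baseComp.1 hy).1, (baseComp_eq_of_mem hy).symm ▸ hP⟩
  · rintro ⟨hy, hP⟩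
    exact ⟨_, ⟨⟨y, hy, rfl⟩, hP⟩, mem_baseComp.2 ⟨hy, .refl⟩⟩

theorem ne_and_not_rel_of_type_ne [Std.Symm r] {T : Λ → Set V → Prop}
    (hT : ∀ x ∈ B, ∃! l, T l (baseComp r B x)) {l m : Λ} (hlm : l ≠ m) {x y : V}
    (hx : x ∈ {z ∈ B | T l (baseComp r B z)}) (hy : y ∈ {z ∈ B | T m (baseComp r B z)}) :
    x ≠ y ∧ ¬ r x y := by
  have hne : baseComp r B x ≠ baseComp r B y := fun h =>
    hlm ((hT x hx.1).unique hx.2 (h ▸ hy.2))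
  refine ⟨by rintro rfl; exact hne rfl, fun hxy => hne ?_⟩
  exact (baseComp_eq_of_mem (mem_baseComp.2 ⟨hy.1, .single hxy⟩)).symm

theorem mapsTo_baseComp {f : V → V'} (hf : Set.MapsTo f B B')
    (hr : ∀ x y, r x y → r' (f x) (f y)) (x : V) :
    Set.MapsTo f (baseComp r B x) (baseComp r' B' (f x)) := fun y hy => by
  rw [mem_baseComp] at hy ⊢
  exact ⟨hf hy.1, Relation.ReflTransGen.lift f hr _ _ hy.2⟩

end Components

section Transport

variable (R : Type*) [CommSemiring R] {V V' : Type*} [AddCommMonoid V] [Module R V]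
  [AddCommMonoid V'] [Module R V']

def HasUniqueBase (B : Set V) : Prop :=
  ∀ B₀ : Set V, IsBaseSet R B₀ → ∀ v ∈ B₀, ∃ u : Rˣ, ∃ w ∈ B, v = (u : R) • w

def PreservesEdges (f : V → V') (B' : Set V') (r : V → V → Prop) (r' : V' → V' → Prop) :
    Prop :=
  ∀ ⦃x y : V⦄ ⦃x' y' : V'⦄ (u v : Rˣ), x' ∈ B' → y' ∈ B' → x' ≠ y' →
    f x = (u : R) • x' → f y = (v : R) • y' → r x y → r' x' y'

variable {R} {B : Set V} {B' : Set V'} {r : V → V → Prop} {r' : V' → V' → Prop}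

theorem IsBaseSet.exists_smul_of_hasUniqueBase (hB : IsBaseSet R B) (hU' : HasUniqueBase R B')
    (e : V ≃ₗ[R] V') :
    ∃ g : V → V', ∀ x ∈ B, g x ∈ B' ∧ ∃ u : Rˣ, e x = (u : R) • g x := by
  have h : ∀ x ∈ B, ∃ w, w ∈ B' ∧ ∃ u : Rˣ, e x = (u : R) • w := fun x hx => by
    obtain ⟨u, w, hw, h⟩ := hU' _ (hB.image e) _ ⟨x, hx, rfl⟩
    exact ⟨w, hw, u, h⟩
  choose! g hg using h
  exact ⟨g, hg⟩

theorem map_span_baseComp_le (e : V ≃ₗ[R] V') (hB : IsBaseSet R B)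
    (hrB : ∀ x y, r x y → x ∈ B ∧ y ∈ B ∧ x ≠ y) (he : PreservesEdges R e B' r r')
    {g : V → V'} (hg : ∀ x ∈ B, g x ∈ B' ∧ ∃ u : Rˣ, e x = (u : R) • g x) (x : V) :
    map (e : V →ₗ[R] V') (span R (baseComp r B x)) ≤ span R (baseComp r' B' (g x)) := by
  have hinj : ∀ y ∈ B, ∀ z ∈ B, g y = g z → y = z := by
    intro y hy z hz hyz
    obtain ⟨-, u, hu⟩ := hg y hy
    obtain ⟨-, v, hv⟩ := hg z hz
    refine hB.eq_of_smul_eq_smul hy hz v u (e.injective ?_)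
    rw [map_smul, map_smul, hu, hv, hyz, smul_smul, smul_smul, mul_comm]
  have hgr : ∀ y z, r y z → r' (g y) (g z) := fun y z hyz => by
    obtain ⟨hy, hz, hne⟩ := hrB y z hyz
    obtain ⟨hgy, u, hu⟩ := hg y hy
    obtain ⟨hgz, v, hv⟩ := hg z hz
    exact he u v hgy hgz (fun h => hne (hinj y hy z hz h)) hu hv hyz
  rw [map_span_le]
  intro y hy
  obtain ⟨-, u, hu⟩ := hg y (mem_baseComp.1 hy).1
  rw [LinearEquiv.coe_coe, hu]
  exact smul_mem _ _ (subset_span (mapsTo_baseComp (fun z hz => (hg z hz).1) hgr x hy))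

theorem exists_map_span_baseComp_eq (e : V ≃ₗ[R] V') (hB : IsBaseSet R B)
    (hB' : IsBaseSet R B') (hU : HasUniqueBase R B) (hU' : HasUniqueBase R B')
    (hrB : ∀ x y, r x y → x ∈ B ∧ y ∈ B ∧ x ≠ y)
    (hrB' : ∀ x y, r' x y → x ∈ B' ∧ y ∈ B' ∧ x ≠ y)
    (he : PreservesEdges R e B' r r') (he' : PreservesEdges R e.symm B r' r) :
    ∀ C ∈ baseComps r B, ∃ C' ∈ baseComps r' B',
      map (e : V →ₗ[R] V') (span R C) = span R C' := by
  obtain ⟨g, hg⟩ := hB.exists_smul_of_hasUniqueBase hU' e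
  obtain ⟨g', hg'⟩ := hB'.exists_smul_of_hasUniqueBase hU e.symm
  rintro _ ⟨x, hx, rfl⟩
  obtain ⟨hgx, u, hu⟩ := hg x hx
  obtain ⟨hg'gx, v, hv⟩ := hg' (g x) hgx
  have hround : g' (g x) = x := by
    refine (hB.eq_of_smul_eq_smul hx hg'gx 1 (u * v) ?_).symm
    rw [Units.val_one, one_smul, Units.val_mul, ← smul_smul, ← hv, ← map_smul, ← hu,
      e.symm_apply_apply]
  refine ⟨_, ⟨g x, hgx, rfl⟩, le_antisymm (map_span_baseComp_le e hB hrB he hg x) ?_⟩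
  have := map_span_baseComp_le e.symm hB' hrB' he' hg' (g x)
  rwa [hround, map_le_iff_le_comap, comap_equiv_eq_map_symm, LinearEquiv.symm_symm] at this

theorem map_span_sUnion_filter_eq (e : V ≃ₗ[R] V') {s : Set (Set V)} {s' : Set (Set V')}
    {P : Set V → Prop} {P' : Set V' → Prop}
    (hs : ∀ C ∈ s, ∃ C' ∈ s', map (e : V →ₗ[R] V') (span R C) = span R C')
    (hs' : ∀ C' ∈ s', ∃ C ∈ s, map (e.symm : V' →ₗ[R] V) (span R C') = span R C)
    (hP : ∀ C C', map (e : V →ₗ[R] V') (span R C) = span R C' → (P C ↔ P' C')) :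
    map (e : V →ₗ[R] V') (span R (⋃₀ {C | C ∈ s ∧ P C})) =
      span R (⋃₀ {C' | C' ∈ s' ∧ P' C'}) := by
  apply le_antisymm
  · rw [map_span_le]
    rintro x ⟨C, ⟨hC, hPC⟩, hx⟩
    obtain ⟨C', hC', h⟩ := hs C hC
    have : e x ∈ span R C' := h ▸ mem_map_of_mem (subset_span hx)
    refine span_mono (Set.subset_sUnion_of_mem (S := {C' | C' ∈ s' ∧ P' C'}) ?_) this
    exact ⟨hC', (hP _ _ h).1 hPC⟩
  · rw [span_le]
    rintro y ⟨C', ⟨hC', hPC'⟩, hy⟩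
    obtain ⟨C, hC, h⟩ := hs' C' hC'
    rw [map_symm_eq_iff] at h
    have : y ∈ map (e : V →ₗ[R] V') (span R C) := h ▸ subset_span hy
    refine map_mono (span_mono (Set.subset_sUnion_of_mem (S := {C | C ∈ s ∧ P C}) ?_)) this
    exact ⟨hC, (hP _ _ h).2 hPC'⟩

end Transport

section Quasilinear

variable {R V : Type*} [CommSemiring R] [AddCommMonoid V] [Module R V] {q : V → R}

/-- Over a semiring `q (x + t) = q x + q t` does not force `bl x t = 0`, so quasilinearity is
propagated through this additivity rather than through `bl`. -/
theorem quasilinear_add_left (bl : V →ₗ[R] V →ₗ[R] R)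
    (hpolar : ∀ x y, q (x + y) = q x + q y + bl x y) {x y t : V} (hx : q (x + t) = q x + q t)
    (hy : q (y + t) = q y + q t) : q (x + y + t) = q (x + y) + q t := by
  have ex : q x + q t + bl x t = q x + q t := (hpolar x t).symm.trans hx
  have ey : q y + q t + bl y t = q y + q t := (hpolar y t).symm.trans hy
  rw [hpolar (x + y) t, hpolar x y, map_add, LinearMap.add_apply]
  calc q x + q y + bl x y + q t + (bl x t + bl y t)
      = (q x + q t + bl x t) + (q y + bl x y + bl y t) := by ring
    _ = (q y + q t + bl y t) + (q x + bl x y) := by rw [ex]; ring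
    _ = q x + q y + bl x y + q t := by rw [ey]; ring

theorem quasilinear_span (bl : V →ₗ[R] V →ₗ[R] R)
    (hpolar : ∀ x y, q (x + y) = q x + q y + bl x y) (hq0 : q 0 = 0) {S T : Set V}
    (h : ∀ u ∈ S, ∀ v ∈ T, ∀ x ∈ span R {u}, ∀ y ∈ span R {v},
      q (x + y) = q x + q y) :
    ∀ x ∈ span R S, ∀ y ∈ span R T, q (x + y) = q x + q y := by
  have add_right : ∀ {t x y : V}, q (t + x) = q t + q x → q (t + y) = q t + q y →
      q (t + (x + y)) = q t + q (x + y) := by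
    intro t x y hx hy
    rw [add_comm t, add_comm (q t)] at hx hy ⊢
    exact quasilinear_add_left bl hpolar hx hy
  intro x hx y hy
  induction hy using Submodule.closure_induction with
  | zero => rw [add_zero, hq0, add_zero]
  | add y z _ _ hy hz => exact add_right hy hz
  | smul_mem c v hv =>
    induction hx using Submodule.closure_induction with
    | zero => rw [zero_add, hq0, zero_add]
    | add x x' _ _ hx hx' => exact quasilinear_add_left bl hpolar hx hx'
    | smul_mem a u hu =>
      exact h u hu v hv _ (mem_span_singleton.2 ⟨a, rfl⟩) _ (mem_span_singleton.2 ⟨c, rfl⟩)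

end Quasilinear

namespace QMod

variable {R : Type u} [CommSemiring R]

theorem Isom.symm {M N : QMod R} : M.Isom N → N.Isom M
  | ⟨e, he⟩ => ⟨e.symm, fun x => by rw [← he, e.apply_symm_apply]⟩

theorem Isom.trans {M N P : QMod R} : M.Isom N → N.Isom P → M.Isom P
  | ⟨e, he⟩, ⟨e', he'⟩ => ⟨e.trans e', fun x => (he' (e x)).trans (he x)⟩

instance (M : QMod R) : Std.Symm M.edge :=
  ⟨fun _ _ ⟨hx, hy, hne, h⟩ => ⟨hy, hx, hne.symm, fun h' => h fun a ha b hb => by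
    rw [add_comm, h' b hb a ha, add_comm]⟩⟩

theorem edge_base (M : QMod R) :
    ∀ x y, M.edge x y → x ∈ M.base ∧ y ∈ M.base ∧ x ≠ y :=
  fun _ _ h => ⟨h.1, h.2.1, h.2.2.1⟩

variable {V V' : QMod R}

theorem restrict_isom_iff_of_map_span_eq (e : V.carrier ≃ₗ[R] V'.carrier)
    (he : ∀ x, V'.q (e x) = V.q x) {C : Set V.carrier} {C' : Set V'.carrier}
    (h : map (e : V.carrier →ₗ[R] V'.carrier) (span R C) = span R C') (N : QMod R) :
    (V.restrict C).Isom N ↔ (V'.restrict C').Isom N :=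
  have hCC' : (V.restrict C).Isom (V'.restrict C') := ⟨e.ofSubmodules _ _ h, fun x => he x.1⟩
  ⟨hCC'.symm.trans, hCC'.trans⟩

theorem preservesEdges (e : V.carrier ≃ₗ[R] V'.carrier) (he : ∀ x, V'.q (e x) = V.q x) :
    PreservesEdges R e V'.base V.edge V'.edge := by
  rintro x y x' y' u v hx' hy' hne hx hy ⟨-, -, -, hq⟩
  have hline : ∀ {z z' : V.carrier} {w : V'.carrier} {c : R}, e z = c • w →
      z' ∈ span R {z} → e z' ∈ span R {w} := fun hz hz' => by
    obtain ⟨d, rfl⟩ := mem_span_singleton.1 hz'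
    rw [map_smul, hz]
    exact smul_mem _ _ (smul_mem _ _ (mem_span_singleton_self _))
  refine ⟨hx', hy', hne, fun hq' => hq fun a ha b hb => ?_⟩
  rw [← he, ← he, ← he, map_add]
  exact hq' _ (hline hx ha) _ (hline hy hb)

theorem qlin_span_of_forall_not_edge (hV : V.Good) {S T : Set V.carrier} (hS : S ⊆ V.base)
    (hT : T ⊆ V.base) (h : ∀ u ∈ S, ∀ v ∈ T, u ≠ v ∧ ¬ V.edge u v) :
    V.Qlin (span R S) (span R T) := by
  obtain ⟨hsq, ⟨bl, -, hpolar⟩, -⟩ := hV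
  refine quasilinear_span bl hpolar (by simpa using hsq 0 0) fun u hu v hv => ?_
  obtain ⟨hne, hnot⟩ := h u hu v hv
  by_contra hq
  exact hnot ⟨hS hu, hT hv, hne, hq⟩

theorem isotypic_orthogonal_sum (hV : V.Good) {Λ : Type*} (rep : Λ → QMod R)
    (hinj : ∀ l m, (rep l).Isom (rep m) → l = m)
    (hcomps : ∀ C ∈ V.comps, ∃ l, (V.restrict C).Isom (rep l))
    {Vl : Λ → Submodule R V.carrier}
    (hVl : ∀ l, Vl l = span R (⋃₀ {C | C ∈ V.comps ∧ (V.restrict C).Isom (rep l)})) :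
    (∀ l m, l ≠ m → V.DisjOrth (Vl l) (Vl m)) ∧
      IsInternalSum (fun l : {l : Λ // Vl l ≠ ⊥} => Vl l.1) := by
  have htype : ∀ x ∈ V.base, ∃! l, (V.restrict (V.comp x)).Isom (rep l) := fun x hx => by
    obtain ⟨l, hl⟩ := hcomps _ ⟨x, hx, rfl⟩
    exact ⟨l, hl, fun m hm => hinj m l (hm.symm.trans hl)⟩
  obtain rfl : Vl = fun l => span R {x ∈ V.base | (V.restrict (V.comp x)).Isom (rep l)} :=
    funext fun l => (hVl l).trans (congrArg _ (sUnion_baseComps_filter _))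
  have hsum := hV.2.2.1.isInternalSum_span_of_partition _ htype
  refine ⟨fun l m hlm => ⟨hsum.inf_eq_bot hlm, ?_⟩, hsum.subtype_ne_bot⟩
  exact qlin_span_of_forall_not_edge hV (Set.sep_subset _ _) (Set.sep_subset _ _)
    fun u hu v hv => ne_and_not_rel_of_type_ne (r := V.edge)
      (T := fun l C => (V.restrict C).Isom (rep l)) htype hlm hu hv

theorem map_span_comps (hV : V.Good) (hV' : V'.Good) (e : V.carrier ≃ₗ[R] V'.carrier)
    (he : ∀ x, V'.q (e x) = V.q x) :
    ∀ C ∈ V.comps, ∃ C' ∈ V'.comps,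
      map (e : V.carrier →ₗ[R] V'.carrier) (span R C) = span R C' :=
  exists_map_span_baseComp_eq e hV.2.2.1 hV'.2.2.1 hV.2.2.2 hV'.2.2.2 V.edge_base V'.edge_base
    (preservesEdges e he) (preservesEdges e.symm fun x => by rw [← he, e.apply_symm_apply])

theorem map_span_isotypic (hV : V.Good) (hV' : V'.Good) (e : V.carrier ≃ₗ[R] V'.carrier)
    (he : ∀ x, V'.q (e x) = V.q x) (N : QMod R) :
    map (e : V.carrier →ₗ[R] V'.carrier)
        (span R (⋃₀ {C | C ∈ V.comps ∧ (V.restrict C).Isom N})) =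
      span R (⋃₀ {C' | C' ∈ V'.comps ∧ (V'.restrict C').Isom N}) :=
  map_span_sUnion_filter_eq e (map_span_comps hV hV' e he)
    (map_span_comps hV' hV e.symm fun x => by rw [← he, e.apply_symm_apply])
    fun _ _ h => restrict_isom_iff_of_map_span_eq e he h N

end QMod

namespace BMod

variable {R : Type u} [CommSemiring R]

theorem Isom.symm {M N : BMod R} : M.Isom N → N.Isom M
  | ⟨e, he⟩ => ⟨e.symm, fun x y => by rw [← he, e.apply_symm_apply, e.apply_symm_apply]⟩

theorem Isom.trans {M N P : BMod R} : M.Isom N → N.Isom P → M.Isom P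
  | ⟨e, he⟩, ⟨e', he'⟩ => ⟨e.trans e', fun x y => (he' (e x) (e y)).trans (he x y)⟩

def Good.bilin {M : BMod R} (hM : M.Good) : M.carrier →ₗ[R] M.carrier →ₗ[R] R :=
  LinearMap.mk₂ R M.b hM.2.1 hM.2.2.1
    (fun x y z => by rw [hM.1, hM.2.1, hM.1 y, hM.1 z])
    (fun a x y => by rw [hM.1, hM.2.2.1, hM.1, smul_eq_mul])

theorem Good.bilin_apply {M : BMod R} (hM : M.Good) (x y : M.carrier) :
    hM.bilin x y = M.b x y :=
  rfl

theorem Good.symm_edge {M : BMod R} (hM : M.Good) : Std.Symm M.edge :=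
  ⟨fun x y ⟨hx, hy, hne, h⟩ => ⟨hy, hx, hne.symm, hM.1 x y ▸ h⟩⟩

theorem edge_base (M : BMod R) :
    ∀ x y, M.edge x y → x ∈ M.base ∧ y ∈ M.base ∧ x ≠ y :=
  fun _ _ h => ⟨h.1, h.2.1, h.2.2.1⟩

variable {V V' : BMod R}

theorem restrict_isom_iff_of_map_span_eq (e : V.carrier ≃ₗ[R] V'.carrier)
    (he : ∀ x y, V'.b (e x) (e y) = V.b x y) {C : Set V.carrier} {C' : Set V'.carrier}
    (h : map (e : V.carrier →ₗ[R] V'.carrier) (span R C) = span R C') (N : BMod R) :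
    (V.restrict C).Isom N ↔ (V'.restrict C').Isom N :=
  have hCC' : (V.restrict C).Isom (V'.restrict C') :=
    ⟨e.ofSubmodules _ _ h, fun x y => he x.1 y.1⟩
  ⟨hCC'.symm.trans, hCC'.trans⟩

theorem preservesEdges (hV' : V'.Good) (e : V.carrier ≃ₗ[R] V'.carrier)
    (he : ∀ x y, V'.b (e x) (e y) = V.b x y) : PreservesEdges R e V'.base V.edge V'.edge := by
  rintro x y x' y' u v hx' hy' hne hx hy ⟨-, -, -, hb⟩
  refine ⟨hx', hy', hne, fun hb' => hb ?_⟩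
  rw [← he, hx, hy, ← hV'.bilin_apply, map_smul, map_smul, LinearMap.smul_apply,
    hV'.bilin_apply, hb', smul_zero, smul_zero]

theorem orthogonal_span (hV : V.Good) {S T : Set V.carrier}
    (h : ∀ u ∈ S, ∀ v ∈ T, V.b u v = 0) :
    ∀ x ∈ span R S, ∀ y ∈ span R T, V.b x y = 0 := by
  have hbot : map₂ hV.bilin (span R S) (span R T) = ⊥ := by
    rw [map₂_span_span, span_eq_bot]
    rintro _ ⟨u, hu, v, hv, rfl⟩
    exact h u hu v hv
  intro x hx y hy
  exact (mem_bot R).1 (hbot ▸ apply_mem_map₂ hV.bilin hx hy)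

theorem isotypic_orthogonal_sum (hV : V.Good) {Λ : Type*} (rep : Λ → BMod R)
    (hinj : ∀ l m, (rep l).Isom (rep m) → l = m)
    (hcomps : ∀ C ∈ V.comps, ∃ l, (V.restrict C).Isom (rep l))
    {Vl : Λ → Submodule R V.carrier}
    (hVl : ∀ l, Vl l = span R (⋃₀ {C | C ∈ V.comps ∧ (V.restrict C).Isom (rep l)})) :
    (∀ l m, l ≠ m → V.DisjOrth (Vl l) (Vl m)) ∧
      IsInternalSum (fun l : {l : Λ // Vl l ≠ ⊥} => Vl l.1) := by
  have := hV.symm_edge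
  have htype : ∀ x ∈ V.base, ∃! l, (V.restrict (V.comp x)).Isom (rep l) := fun x hx => by
    obtain ⟨l, hl⟩ := hcomps _ ⟨x, hx, rfl⟩
    exact ⟨l, hl, fun m hm => hinj m l (hm.symm.trans hl)⟩
  obtain rfl : Vl = fun l => span R {x ∈ V.base | (V.restrict (V.comp x)).Isom (rep l)} :=
    funext fun l => (hVl l).trans (congrArg _ (sUnion_baseComps_filter _))
  have hsum := hV.2.2.2.1.isInternalSum_span_of_partition _ htype
  refine ⟨fun l m hlm => ⟨hsum.inf_eq_bot hlm, orthogonal_span hV fun u hu v hv => ?_⟩,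
    hsum.subtype_ne_bot⟩
  obtain ⟨hne, hnot⟩ := ne_and_not_rel_of_type_ne (r := V.edge)
    (T := fun l C => (V.restrict C).Isom (rep l)) htype hlm hu hv
  by_contra hb
  exact hnot ⟨hu.1, hv.1, hne, hb⟩

theorem map_span_comps (hV : V.Good) (hV' : V'.Good) (e : V.carrier ≃ₗ[R] V'.carrier)
    (he : ∀ x y, V'.b (e x) (e y) = V.b x y) :
    ∀ C ∈ V.comps, ∃ C' ∈ V'.comps,
      map (e : V.carrier →ₗ[R] V'.carrier) (span R C) = span R C' :=
  exists_map_span_baseComp_eq e hV.2.2.2.1 hV'.2.2.2.1 hV.2.2.2.2 hV'.2.2.2.2 V.edge_base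
    V'.edge_base (preservesEdges hV' e he)
    (preservesEdges hV e.symm fun x y => by rw [← he, e.apply_symm_apply, e.apply_symm_apply])

theorem map_span_isotypic (hV : V.Good) (hV' : V'.Good) (e : V.carrier ≃ₗ[R] V'.carrier)
    (he : ∀ x y, V'.b (e x) (e y) = V.b x y) (N : BMod R) :
    map (e : V.carrier →ₗ[R] V'.carrier)
        (span R (⋃₀ {C | C ∈ V.comps ∧ (V.restrict C).Isom N})) =
      span R (⋃₀ {C' | C' ∈ V'.comps ∧ (V'.restrict C').Isom N}) :=
  map_span_sUnion_filter_eq e (map_span_comps hV hV' e he)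
    (map_span_comps hV' hV e.symm fun x y => by
      rw [← he, e.apply_symm_apply, e.apply_symm_apply])
    fun _ _ h => restrict_isom_iff_of_map_span_eq e he h N

end BMod

/-- Let `V` be a quadratic (resp. bilinear) `R`-module with unique base
and fix representatives `rep l` of the isometry classes of indecomposable modules with
unique base.  Let `V_l` be the isotypical component of type `l` (the span of the union of
all indecomposable components of `V` of type `l`).  Then `V = ⊥_{l ∈ Λ'} V_l` with
`Λ' = {l | V_l ≠ 0}`, and every isometry `σ : V → V'` maps each indecomposable component
of `V` onto one of `V'` of the same type, so that `σ(V_l) = V'_l` for every `l`. -/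
theorem isotypical_decomposition (R : Type u) [CommSemiring R] :
    (∀ V V' : QMod R, V.Good → V'.Good →
      ∀ (Λ : Type u) (rep : Λ → QMod R),
        (∀ l, (rep l).Good ∧ (rep l).Indecomp) →
        (∀ l m, (rep l).Isom (rep m) → l = m) →
        (∀ C ∈ V.comps, ∃ l, (V.restrict C).Isom (rep l)) →
        (∀ C ∈ V'.comps, ∃ l, (V'.restrict C).Isom (rep l)) →
        ∀ (Vl : Λ → Submodule R V.carrier) (Vl' : Λ → Submodule R V'.carrier),
          (∀ l, Vl l =
            Submodule.span R (⋃₀ {C | C ∈ V.comps ∧ (V.restrict C).Isom (rep l)})) →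
          (∀ l, Vl' l =
            Submodule.span R (⋃₀ {C | C ∈ V'.comps ∧ (V'.restrict C).Isom (rep l)})) →
          ((∀ l m, l ≠ m → V.DisjOrth (Vl l) (Vl m)) ∧
            IsInternalSum (fun l : {l : Λ // Vl l ≠ ⊥} => Vl l.1)) ∧
          ∀ e : V.carrier ≃ₗ[R] V'.carrier, (∀ x, V'.q (e x) = V.q x) →
            (∀ C ∈ V.comps, ∃ C' ∈ V'.comps,
                Submodule.map e.toLinearMap (Submodule.span R C) = Submodule.span R C' ∧
                ∀ l, (V.restrict C).Isom (rep l) ↔ (V'.restrict C').Isom (rep l)) ∧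
            ∀ l, Submodule.map e.toLinearMap (Vl l) = Vl' l) ∧
    (∀ V V' : BMod R, V.Good → V'.Good →
      ∀ (Λ : Type u) (rep : Λ → BMod R),
        (∀ l, (rep l).Good ∧ (rep l).Indecomp) →
        (∀ l m, (rep l).Isom (rep m) → l = m) →
        (∀ C ∈ V.comps, ∃ l, (V.restrict C).Isom (rep l)) →
        (∀ C ∈ V'.comps, ∃ l, (V'.restrict C).Isom (rep l)) →
        ∀ (Vl : Λ → Submodule R V.carrier) (Vl' : Λ → Submodule R V'.carrier),
          (∀ l, Vl l =
            Submodule.span R (⋃₀ {C | C ∈ V.comps ∧ (V.restrict C).Isom (rep l)})) →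
          (∀ l, Vl' l =
            Submodule.span R (⋃₀ {C | C ∈ V'.comps ∧ (V'.restrict C).Isom (rep l)})) →
          ((∀ l m, l ≠ m → V.DisjOrth (Vl l) (Vl m)) ∧
            IsInternalSum (fun l : {l : Λ // Vl l ≠ ⊥} => Vl l.1)) ∧
          ∀ e : V.carrier ≃ₗ[R] V'.carrier, (∀ x y, V'.b (e x) (e y) = V.b x y) →
            (∀ C ∈ V.comps, ∃ C' ∈ V'.comps,
                Submodule.map e.toLinearMap (Submodule.span R C) = Submodule.span R C' ∧
                ∀ l, (V.restrict C).Isom (rep l) ↔ (V'.restrict C').Isom (rep l)) ∧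
            ∀ l, Submodule.map e.toLinearMap (Vl l) = Vl' l) := by
  refine ⟨fun V V' hV hV' _ rep _ hinj hcomps _ _ _ hVl hVl' => ⟨?_, fun e he => ⟨?_, ?_⟩⟩,
    fun V V' hV hV' _ rep _ hinj hcomps _ _ _ hVl hVl' => ⟨?_, fun e he => ⟨?_, ?_⟩⟩⟩
  · exact QMod.isotypic_orthogonal_sum hV rep hinj hcomps hVl
  · exact fun C hC => (QMod.map_span_comps hV hV' e he C hC).imp fun _ ⟨hC', h⟩ =>
      ⟨hC', h, fun l => QMod.restrict_isom_iff_of_map_span_eq e he h (rep l)⟩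
  · intro l
    rw [hVl, hVl']
    exact QMod.map_span_isotypic hV hV' e he (rep l)
  · exact BMod.isotypic_orthogonal_sum hV rep hinj hcomps hVl
  · exact fun C hC => (BMod.map_span_comps hV hV' e he C hC).imp fun _ ⟨hC', h⟩ =>
      ⟨hC', h, fun l => BMod.restrict_isom_iff_of_map_span_eq e he h (rep l)⟩
  · intro l
    rw [hVl, hVl']
    exact BMod.map_span_isotypic hV hV' e he (rep l)
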